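/- arXiv:1105.2845 — 7 statements merged into one kernel-verified Lean document; each statement's English description precedes it below -/
import Mathlib

section
/- For all real numbers α, β and every γ > 0, the integral ∫_α^β dx/(√|x| + γ) is at most 2(√|α| + √|β|). -/
/-! The integrand is bounded by `|x|^(-1/2)`, whose integral from `0` to `b` is `2√|b|`;
write `∫_α^β = ∫_0^β - ∫_0^α` and bound both pieces in absolute value. -/

open Real intervalIntegral MeasureTheory Set

theorem abs_intervalIntegral_zero_le_two_sqrt {f : ℝ → ℝ} {b : ℝ} (hb : 0 ≤ b)
    (hf : ∀ x ∈ Ioc 0 b, |f x| ≤ (√x)⁻¹) : |∫ x in 0..b, f x| ≤ 2 * √b := by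
  have hrpow : ∫ x in 0..b, x ^ (-(1 / 2) : ℝ) = 2 * √b := by
    rw [integral_rpow (by norm_num), sqrt_eq_rpow]
    norm_num
    ring
  calc |∫ x in 0..b, f x| ≤ ∫ x in 0..b, x ^ (-(1 / 2) : ℝ) :=
        norm_integral_le_of_norm_le (f := f) hb
          (ae_of_all _ fun x hx => by rw [rpow_neg hx.1.le, ← sqrt_eq_rpow]; exact hf x hx)
          (intervalIntegrable_rpow' (by norm_num))
    _ = 2 * √b := hrpow

theorem abs_intervalIntegral_zero_le_two_sqrt_abs {f : ℝ → ℝ}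
    (hf : ∀ x ≠ 0, |f x| ≤ (√|x|)⁻¹) (b : ℝ) : |∫ x in 0..b, f x| ≤ 2 * √|b| := by
  rcases le_total 0 b with hb | hb
  · rw [abs_of_nonneg hb]
    exact abs_intervalIntegral_zero_le_two_sqrt hb fun x hx => by
      simpa [abs_of_pos hx.1] using hf x hx.1.ne'
  · have h := abs_intervalIntegral_zero_le_two_sqrt (f := fun x => f (-x)) (neg_nonneg.2 hb)
      fun x hx => by simpa [abs_of_pos hx.1] using hf (-x) (neg_ne_zero.2 hx.1.ne')
    rwa [integral_comp_neg, neg_neg, neg_zero, integral_symm, abs_neg, ← abs_of_nonpos hb] at h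

theorem intervalIntegral_le_two_mul_sqrt_abs_add_sqrt_abs {f : ℝ → ℝ} {α β : ℝ}
    (hα : IntervalIntegrable f volume 0 α) (hβ : IntervalIntegrable f volume 0 β)
    (hf : ∀ x ≠ 0, |f x| ≤ (√|x|)⁻¹) : ∫ x in α..β, f x ≤ 2 * (√|α| + √|β|) := by
  rw [← integral_interval_sub_left hβ hα]
  have hα' := abs_le.1 (abs_intervalIntegral_zero_le_two_sqrt_abs hf α)
  have hβ' := abs_le.1 (abs_intervalIntegral_zero_le_two_sqrt_abs hf β)
  linarith [hα'.1, hβ'.2]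

/-- For all real `α, β` and every `γ > 0`,
`∫_α^β dx/(√|x| + γ) ≤ 2(√|α| + √|β|)`. -/
theorem stmt0 (α β γ : ℝ) (hγ : 0 < γ) :
    ∫ x in α..β, 1 / (Real.sqrt |x| + γ) ≤ 2 * (Real.sqrt |α| + Real.sqrt |β|) := by
  have hcont : Continuous fun x : ℝ => 1 / (√|x| + γ) :=
    continuous_const.div (continuous_abs.sqrt.add continuous_const) fun x => by positivity
  refine intervalIntegral_le_two_mul_sqrt_abs_add_sqrt_abs (hcont.intervalIntegrable _ _)
    (hcont.intervalIntegrable _ _) fun x hx => ?_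
  have hsqrt : 0 < √|x| := sqrt_pos.2 (abs_pos.2 hx)
  rw [abs_of_pos (by positivity), one_div]
  exact inv_anti₀ hsqrt (le_add_of_nonneg_right hγ.le)
end

section
/- Let γ, λ > 0 and let u : ℝ → ℝ be differentiable with u'(t) = λ(√|u(t)| + γ) for all t ≥ t₀. Then for all t ≥ t₀, t - t₀ ≤ (2/λ)(√|u(t)| + √|u(t₀)|). -/
/-!
Since `u' ≥ λγ > 0`, `u` is strictly increasing, so on `[t₀, t]` it changes sign at most once.
Where `u > 0`, `(2/λ)√u - s` has derivative `γ/√u ≥ 0`, so elapsed time is bounded by the growth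
of `(2/λ)√u`. The time reflection `s ↦ -u (-s)` preserves the equation and handles the stretch
where `u ≤ 0`. Splitting `[t₀, t]` at the zero of `u` and adding the two bounds gives the claim.
-/

open Set Real

section SqrtAbsODE

variable {γ lam a b : ℝ} {u : ℝ → ℝ}

lemma strictMonoOn_of_hasDerivAt_sqrt_abs (hγ : 0 < γ) (hlam : 0 < lam)
    (hu : ∀ s ∈ Icc a b, HasDerivAt u (lam * (√|u s| + γ)) s) :
    StrictMonoOn u (Icc a b) :=
  strictMonoOn_of_hasDerivWithinAt_pos (convex_Icc a b)
    (fun s hs ↦ (hu s hs).continuousAt.continuousWithinAt)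
    (fun s hs ↦ (hu s (interior_subset hs)).hasDerivWithinAt) fun s _ ↦ by positivity

lemma sub_le_of_hasDerivAt_sqrt_abs_of_nonneg (hγ : 0 < γ) (hlam : 0 < lam) (hab : a ≤ b)
    (hu : ∀ s ∈ Icc a b, HasDerivAt u (lam * (√|u s| + γ)) s) (ha : 0 ≤ u a) :
    b - a ≤ 2 / lam * (√|u b| - √|u a|) := by
  have hmono := strictMonoOn_of_hasDerivAt_sqrt_abs hγ hlam hu
  have hpos : ∀ s ∈ Ioo a b, 0 < u s := fun s hs ↦
    ha.trans_lt (hmono (left_mem_Icc.2 hab) (Ioo_subset_Icc_self hs) hs.1)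
  have hcont : ContinuousOn u (Icc a b) := fun s hs ↦ (hu s hs).continuousAt.continuousWithinAt
  have hf : MonotoneOn (fun s ↦ 2 / lam * √(u s) - s) (Icc a b) := by
    refine monotoneOn_of_hasDerivWithinAt_nonneg (f' := fun s ↦ γ / √(u s)) (convex_Icc a b)
      ((continuousOn_const.mul hcont.sqrt).sub continuousOn_id) (fun s hs ↦ ?_)
      fun s _ ↦ by positivity
    rw [interior_Icc] at hs
    have hus := hpos s hs
    refine ((((hu s (Ioo_subset_Icc_self hs)).sqrt hus.ne').const_mul (2 / lam)).sub
      (hasDerivAt_id s)).hasDerivWithinAt.congr_deriv ?_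
    rw [abs_of_pos hus]
    field_simp
    ring
  have hfab := hf (left_mem_Icc.2 hab) (right_mem_Icc.2 hab) hab
  have hub : 0 ≤ u b := ha.trans (hmono.monotoneOn (left_mem_Icc.2 hab) (right_mem_Icc.2 hab) hab)
  simp only at hfab
  rw [abs_of_nonneg hub, abs_of_nonneg ha]
  linarith

lemma sub_le_of_hasDerivAt_sqrt_abs_of_nonpos (hγ : 0 < γ) (hlam : 0 < lam) (hab : a ≤ b)
    (hu : ∀ s ∈ Icc a b, HasDerivAt u (lam * (√|u s| + γ)) s) (hb : u b ≤ 0) :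
    b - a ≤ 2 / lam * (√|u a| - √|u b|) := by
  have hv : ∀ s ∈ Icc (-b) (-a), HasDerivAt (fun s ↦ -u (-s)) (lam * (√|-u (-s)| + γ)) s := by
    intro s hs
    have hs' : -s ∈ Icc a b := ⟨le_neg.1 hs.2, neg_le.1 hs.1⟩
    exact ((hu (-s) hs').comp s (hasDerivAt_neg s)).neg.congr_deriv (by simp [abs_neg])
  have := sub_le_of_hasDerivAt_sqrt_abs_of_nonneg hγ hlam (neg_le_neg hab) hv
    (by simpa using hb)
  simp only [neg_neg, abs_neg] at this
  linarith

end SqrtAbsODE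

/-- If `γ, λ > 0` and `u : ℝ → ℝ` is differentiable with
`u'(t) = λ(√|u(t)| + γ)` for all `t ≥ t₀`, then for all `t ≥ t₀`,
`t - t₀ ≤ (2/λ)(√|u(t)| + √|u(t₀)|)`. -/
theorem stmt1 (γ lam t₀ : ℝ) (hγ : 0 < γ) (hlam : 0 < lam) (u : ℝ → ℝ)
    (hu : ∀ t, t₀ ≤ t → HasDerivAt u (lam * (Real.sqrt |u t| + γ)) t) :
    ∀ t, t₀ ≤ t → t - t₀ ≤ (2 / lam) * (Real.sqrt |u t| + Real.sqrt |u t₀|) := by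
  intro t ht
  have hu_on : ∀ {a b}, t₀ ≤ a → ∀ s ∈ Icc a b, HasDerivAt u (lam * (√|u s| + γ)) s :=
    fun ha s hs ↦ hu s (ha.trans hs.1)
  have h2lam : 0 ≤ 2 / lam := by positivity
  rcases le_or_gt 0 (u t₀) with h₀ | h₀
  · have := sub_le_of_hasDerivAt_sqrt_abs_of_nonneg hγ hlam ht (hu_on le_rfl) h₀
    linarith [mul_nonneg h2lam (sqrt_nonneg |u t₀|)]
  rcases le_or_gt (u t) 0 with h₁ | h₁
  · have := sub_le_of_hasDerivAt_sqrt_abs_of_nonpos hγ hlam ht (hu_on le_rfl) h₁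
    linarith [mul_nonneg h2lam (sqrt_nonneg |u t|)]
  obtain ⟨c, hc, huc⟩ : ∃ c ∈ Icc t₀ t, u c = 0 :=
    intermediate_value_Icc ht (fun s hs ↦ (hu_on le_rfl s hs).continuousAt.continuousWithinAt)
      ⟨h₀.le, h₁.le⟩
  have hleft := sub_le_of_hasDerivAt_sqrt_abs_of_nonpos hγ hlam hc.1 (hu_on le_rfl) huc.le
  have hright := sub_le_of_hasDerivAt_sqrt_abs_of_nonneg hγ hlam hc.2 (hu_on hc.1) huc.ge
  rw [huc, abs_zero, sqrt_zero] at hleft hright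
  linarith
end

section
/- Let γ, λ > 0, t₀ ∈ ℝ, and suppose for each j ∈ ℕ, u_j : ℝ → ℝ is differentiable with u_j'(t) = λ(√|u_j(t)| + γ_j) for all t, where γ_j > 0. If for some t > t₀ the sequence (u_j(t))_j and (u_j(t₀))_j both tend to 0 as j → ∞, then we reach a contradiction; i.e., no such family of solutions exists with λ(t - t₀)/2 > 0 and √|u_j(t)| + √|u_j(t₀)| → 0. -/
/-! Along a solution, `√u` grows at rate at least `λ/2` where `u > 0`, and `√(-u)` decreases at
that rate where `u < 0`. A solution is strictly increasing, so it vanishes at most once on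
`[t₀, t]`; splitting there gives `λ (t - t₀) / 2 ≤ √|u t| + √|u t₀|` uniformly in `γ`, which
is incompatible with both values tending to `0`. -/

open Filter Topology Set

section SqrtGrowth

variable {u u' : ℝ → ℝ} {lam a b : ℝ}

theorem mul_sub_le_sqrt_sub_sqrt_of_nonneg (hlam : 0 ≤ lam) (hu : ∀ s, HasDerivAt u (u' s) s)
    (hlow : ∀ s, lam * √|u s| < u' s) (hab : a ≤ b) (ha : 0 ≤ u a) :
    lam / 2 * (b - a) ≤ √(u b) - √(u a) := by
  have hmono : StrictMono u :=
    strictMono_of_hasDerivAt_pos hu fun s => (by positivity : 0 ≤ lam * √|u s|).trans_lt (hlow s)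
  have hpos : ∀ s ∈ Ioo a b, 0 < u s := fun s hs => ha.trans_lt (hmono hs.1)
  have hcont : Continuous u := continuous_iff_continuousAt.2 fun s => (hu s).continuousAt
  have hgrowth : MonotoneOn (fun s => √(u s) - lam / 2 * s) (Icc a b) := by
    refine monotoneOn_of_hasDerivWithinAt_nonneg (convex_Icc a b)
      (by fun_prop) (fun s hs => ?_) (f' := fun s => u' s / (2 * √(u s)) - lam / 2) fun s hs => ?_
    <;> rw [interior_Icc] at hs
    · exact (((hu s).sqrt (hpos s hs).ne').sub
        ((hasDerivAt_id s).const_mul (lam / 2)) |>.hasDerivWithinAt).congr_deriv (by ring)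
    · have hus := hpos s hs
      have hsqrt : 0 < √(u s) := Real.sqrt_pos.2 hus
      have := hlow s
      rw [abs_of_pos hus] at this
      rw [sub_nonneg, le_div_iff₀ (by positivity)]
      linarith
  have := hgrowth (left_mem_Icc.2 hab) (right_mem_Icc.2 hab) hab
  simp only at this
  linarith

theorem mul_sub_le_sqrt_neg_sub_sqrt_neg_of_nonpos (hlam : 0 ≤ lam)
    (hu : ∀ s, HasDerivAt u (u' s) s) (hlow : ∀ s, lam * √|u s| < u' s) (hab : a ≤ b)
    (hb : u b ≤ 0) : lam / 2 * (b - a) ≤ √(-u a) - √(-u b) := by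
  -- `s ↦ -u (-s)` satisfies the same differential inequality
  have hv : ∀ s, HasDerivAt (fun s => -u (-s)) (u' (-s)) s := fun s =>
    ((hu (-s)).comp s (hasDerivAt_neg s)).fun_neg.congr_deriv (by ring)
  have := mul_sub_le_sqrt_sub_sqrt_of_nonneg hlam hv (fun s => by simpa using hlow (-s))
    (neg_le_neg hab) (by simpa using hb)
  simp only [neg_neg] at this
  linarith

theorem mul_sub_le_sqrt_abs_add_sqrt_abs (hlam : 0 ≤ lam) (hu : ∀ s, HasDerivAt u (u' s) s)
    (hlow : ∀ s, lam * √|u s| < u' s) (hab : a ≤ b) :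
    lam / 2 * (b - a) ≤ √|u b| + √|u a| := by
  have sqrt_le_abs : ∀ x, √x ≤ √|x| := fun x => Real.sqrt_le_sqrt (le_abs_self x)
  have sqrt_neg_le_abs : ∀ x, √(-x) ≤ √|x| := fun x => Real.sqrt_le_sqrt (neg_le_abs x)
  have hsqrt_nonneg := Real.sqrt_nonneg
  rcases le_or_gt 0 (u a) with ha | ha
  · have := mul_sub_le_sqrt_sub_sqrt_of_nonneg hlam hu hlow hab ha
    linarith [sqrt_le_abs (u b), hsqrt_nonneg (u a), hsqrt_nonneg |u a|]
  rcases le_or_gt (u b) 0 with hb | hb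
  · have := mul_sub_le_sqrt_neg_sub_sqrt_neg_of_nonpos hlam hu hlow hab hb
    linarith [sqrt_neg_le_abs (u a), hsqrt_nonneg (-u b), hsqrt_nonneg |u b|]
  have hcont : ContinuousOn u (Icc a b) := fun s _ => (hu s).continuousAt.continuousWithinAt
  obtain ⟨c, ⟨hac, hcb⟩, hc⟩ := intermediate_value_Icc hab hcont ⟨ha.le, hb.le⟩
  have hleft := mul_sub_le_sqrt_neg_sub_sqrt_neg_of_nonpos hlam hu hlow hac hc.le
  have hright := mul_sub_le_sqrt_sub_sqrt_of_nonneg hlam hu hlow hcb hc.ge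
  simp only [hc, neg_zero, Real.sqrt_zero] at hleft hright
  linarith [sqrt_le_abs (u b), sqrt_neg_le_abs (u a)]

end SqrtGrowth

/-- Dieudonné's argument: there is no family of solutions `u_j` of
`u_j' = λ(√|u_j| + γ_j)` with `λ, γ_j > 0` whose values at some `t > t₀`
and at `t₀` both tend to `0` as `j → ∞`. -/
theorem stmt2 (lam t₀ t : ℝ) (hlam : 0 < lam) (ht : t₀ < t)
    (γ : ℕ → ℝ) (hγ : ∀ j, 0 < γ j) (u : ℕ → ℝ → ℝ)
    (hu : ∀ j s, HasDerivAt (u j) (lam * (Real.sqrt |u j s| + γ j)) s)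
    (h1 : Tendsto (fun j => u j t) atTop (𝓝 0))
    (h2 : Tendsto (fun j => u j t₀) atTop (𝓝 0)) : False := by
  have hbound : ∀ j, lam / 2 * (t - t₀) ≤ √|u j t| + √|u j t₀| := fun j =>
    mul_sub_le_sqrt_abs_add_sqrt_abs hlam.le (hu j)
      (fun s => by nlinarith [mul_pos hlam (hγ j)]) ht.le
  have hlim : Tendsto (fun j => √|u j t| + √|u j t₀|) atTop (𝓝 0) := by
    simpa using h1.abs.sqrt.add h2.abs.sqrt
  have := ge_of_tendsto' hlim hbound
  nlinarith [mul_pos hlam (sub_pos.2 ht)]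
end

section
/- The vector field f : c₀ → c₀ defined coordinatewise by f(x)_n = √|x_n| + 1/(n+1) is well defined (maps c₀ into c₀) and continuous. -/
/-!
The square root is ½-Hölder, `|√a - √b| ≤ √|a - b|`, hence uniformly continuous, and so is
`t ↦ √|t|`. Post-composing with a uniformly continuous function fixing `0` maps `c₀` to itself and
preserves uniform convergence, so it is continuous for the sup norm; `F` is this map followed by
translation by the sequence `1/(n+1) ∈ c₀`.
-/

open Filter Topology ZeroAtInfty

theorem Real.sqrt_le_sqrt_add_sqrt_sub {a b : ℝ} (hba : b ≤ a) : √a ≤ √b + √(a - b) := by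
  have hb : b ≤ √b ^ 2 := by
    rcases le_total 0 b with h0 | h0
    · rw [Real.sq_sqrt h0]
    · rw [Real.sqrt_eq_zero_of_nonpos h0]; simpa using h0
  rw [Real.sqrt_le_iff]
  refine ⟨by positivity, ?_⟩
  nlinarith [Real.sq_sqrt (sub_nonneg.2 hba),
    mul_nonneg (Real.sqrt_nonneg b) (Real.sqrt_nonneg (a - b))]

theorem Real.abs_sqrt_sub_sqrt_le (a b : ℝ) : |√a - √b| ≤ √|a - b| := by
  wlog hba : b ≤ a generalizing a b
  · rw [abs_sub_comm, abs_sub_comm a]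
    exact this b a (le_of_not_ge hba)
  rw [abs_of_nonneg (sub_nonneg.2 (Real.sqrt_le_sqrt hba)), abs_of_nonneg (sub_nonneg.2 hba)]
  linarith [Real.sqrt_le_sqrt_add_sqrt_sub hba]

theorem Real.uniformContinuous_sqrt : UniformContinuous Real.sqrt := by
  refine Metric.uniformContinuous_iff.2 fun ε hε => ⟨ε ^ 2, by positivity, fun a b hab => ?_⟩
  calc dist √a √b ≤ √|a - b| := Real.abs_sqrt_sub_sqrt_le a b
    _ < √(ε ^ 2) := Real.sqrt_lt_sqrt (abs_nonneg _) hab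
    _ = ε := Real.sqrt_sq hε.le

namespace ZeroAtInftyContinuousMap

variable {α β γ : Type*} [TopologicalSpace α] [PseudoMetricSpace β] [Zero β]
  [PseudoMetricSpace γ] [Zero γ]

def compLeft (g : β → γ) (hg : Continuous g) (hg0 : g 0 = 0) (f : C₀(α, β)) : C₀(α, γ) where
  toFun := g ∘ f
  continuous_toFun := hg.comp f.continuous
  zero_at_infty' := hg0 ▸ (hg.tendsto 0).comp (zero_at_infty f)

theorem continuous_compLeft {g : β → γ} (hg : UniformContinuous g) (hg0 : g 0 = 0) :
    Continuous (compLeft (α := α) g hg.continuous hg0) :=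
  continuous_iff_continuousAt.2 fun f =>
    tendsto_iff_tendstoUniformly.2 <| hg.comp_tendstoUniformly <|
      tendsto_iff_tendstoUniformly.1 (tendsto_id (x := 𝓝 f))

end ZeroAtInftyContinuousMap

noncomputable def oneDivSucc : C₀(ℕ, ℝ) where
  toFun n := 1 / ((n : ℝ) + 1)
  continuous_toFun := continuous_of_discreteTopology
  zero_at_infty' := cocompact_eq_atTop (α := ℕ) ▸ tendsto_one_div_add_atTop_nhds_zero_nat

/-- The vector field `f : c₀ → c₀` given coordinatewise by
`f(x)_n = √|x_n| + 1/(n+1)` is well defined (maps `c₀` into `c₀`)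
and continuous. Here `c₀` is modeled as `C₀(ℕ, ℝ)` with the sup norm. -/
theorem stmt3 : ∃ F : ZeroAtInftyContinuousMap ℕ ℝ → ZeroAtInftyContinuousMap ℕ ℝ,
    Continuous F ∧ ∀ (x : ZeroAtInftyContinuousMap ℕ ℝ) (n : ℕ),
      F x n = Real.sqrt |x n| + 1 / ((n : ℝ) + 1) := by
  have hg : UniformContinuous fun t : ℝ => √|t| :=
    Real.uniformContinuous_sqrt.comp lipschitzWith_one_norm.uniformContinuous
  have hg0 : √|(0 : ℝ)| = 0 := by simp
  exact ⟨fun x => x.compLeft _ hg.continuous hg0 + oneDivSucc,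
    (ZeroAtInftyContinuousMap.continuous_compLeft hg hg0).add continuous_const, fun _ _ => rfl⟩
end

section
/- For the field f : c₀ → c₀ given by f(x)_n = √|x_n| + 1/(n+1), the autonomous ODE u'(t) = f(u(t)) has no local solution u : I → c₀ on any nonempty open interval I ⊆ ℝ. -/
/-!
Each coordinate `g = uₙ` of a solution solves the scalar equation `g' = √|g| + 1/(n+1)`, so it is a
strict supersolution of `v' = √|v|`. The latter has the non-unique solutions
`v_c(r) = (r - c)|r - c| / 4`, and by the fencing theorem `g` stays above `v_c` on `[s, t]` as soon
as it starts above it. Taking `c = s + 2√|g s|` gives `g t ≥ (t - s - 2√|g s|)² / 4`. Since both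
`u s` and `u t` tend to zero along the coordinates, letting `n → ∞` yields `(t - s)² / 4 ≤ 0`.
-/

open Set Filter Topology
open scoped ZeroAtInfty

namespace ZeroAtInftyContinuousMap

variable {α β 𝕜 : Type*} [TopologicalSpace α] [NontriviallyNormedField 𝕜] [NormedAddCommGroup β]
  [NormedSpace 𝕜 β]

variable (𝕜) in
def evalCLM (x : α) : C₀(α, β) →L[𝕜] β where
  toFun f := f x
  map_add' _ _ := rfl
  map_smul' _ _ := rfl
  cont :=
    (continuous_apply x).comp (BoundedContinuousFunction.continuous_coe.comp isometry_toBCF.continuous)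

theorem _root_.HasDerivAt.zeroAtInftyContinuousMap_apply {u : 𝕜 → C₀(α, β)} {u' : C₀(α, β)}
    {t : 𝕜} (h : HasDerivAt u u' t) (x : α) : HasDerivAt (fun r => u r x) (u' x) t :=
  (evalCLM 𝕜 x (β := β)).hasFDerivAt.comp_hasDerivAt t h

theorem tendsto_atTop_nat (f : C₀(ℕ, β)) : Tendsto f atTop (𝓝 0) :=
  cocompact_eq_atTop (α := ℕ) ▸ zero_at_infty f

end ZeroAtInftyContinuousMap

theorem hasDerivAt_mul_abs (x : ℝ) : HasDerivAt (fun y => y * |y|) (2 * |x|) x := by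
  refine hasDerivAt_of_hasDerivAt_of_ne' (f := fun y => y * |y|) (g := fun y => 2 * |y|) (x := 0)
    (fun y hy => ?_) (by fun_prop) (by fun_prop) x
  refine ((hasDerivAt_id y).mul (hasDerivAt_abs hy)).congr_deriv ?_
  simp only [id, one_mul, self_mul_sign]
  ring

theorem hasDerivAt_sub_mul_abs_sub_div_four (c r : ℝ) :
    HasDerivAt (fun r => (r - c) * |r - c| / 4) (√|(r - c) * |r - c| / 4|) r := by
  refine (((hasDerivAt_mul_abs (r - c)).comp r ((hasDerivAt_id r).sub_const c)).div_const 4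
    ).congr_deriv ?_
  rw [abs_div, abs_mul, abs_abs, abs_of_pos (four_pos : (0 : ℝ) < 4),
    show |r - c| * |r - c| / 4 = (|r - c| / 2) ^ 2 by ring, Real.sqrt_sq (by positivity)]
  ring

theorem sub_mul_abs_sub_div_four_le {g g' : ℝ → ℝ} {s t c : ℝ}
    (hg : ∀ r ∈ Icc s t, HasDerivAt g (g' r) r) (hg' : ∀ r ∈ Icc s t, √|g r| < g' r)
    (hs : (s - c) * |s - c| / 4 ≤ g s) : ∀ r ∈ Icc s t, (r - c) * |r - c| / 4 ≤ g r :=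
  image_le_of_deriv_right_lt_deriv_boundary'
    (fun r _ => (hasDerivAt_sub_mul_abs_sub_div_four c r).continuousAt.continuousWithinAt)
    (fun r _ => (hasDerivAt_sub_mul_abs_sub_div_four c r).hasDerivWithinAt) hs
    (fun r hr => (hg r hr).continuousAt.continuousWithinAt)
    (fun r hr => (hg r (Ico_subset_Icc_self hr)).hasDerivWithinAt)
    (fun r hr heq => heq ▸ hg' r (Ico_subset_Icc_self hr))

theorem sq_le_of_sqrt_abs_lt_deriv {g g' : ℝ → ℝ} {s t : ℝ}
    (hg : ∀ r ∈ Icc s t, HasDerivAt g (g' r) r) (hg' : ∀ r ∈ Icc s t, √|g r| < g' r)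
    (hst : 2 * √|g s| ≤ t - s) : (t - s - 2 * √|g s|) ^ 2 / 4 ≤ g t := by
  set c := s + 2 * √|g s|
  have hs : (s - c) * |s - c| / 4 ≤ g s := by
    have hsq : √|g s| ^ 2 = |g s| := Real.sq_sqrt (abs_nonneg _)
    rw [show s - c = -(2 * √|g s|) by ring, abs_neg,
      abs_of_nonneg (by positivity : (0 : ℝ) ≤ 2 * √|g s|)]
    nlinarith [neg_abs_le (g s)]
  have ht := sub_mul_abs_sub_div_four_le hg hg' hs t ⟨by linarith [Real.sqrt_nonneg |g s|], le_rfl⟩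
  rwa [abs_of_nonneg (by linarith : 0 ≤ t - c), show t - c = t - s - 2 * √|g s| by ring, ← sq]
    at ht

/-- Dieudonné's counterexample: for the field `f : c₀ → c₀` with
`f(x)_n = √|x_n| + 1/(n+1)`, the ODE `u' = f(u)` has no local solution on any
nonempty open interval. -/
theorem stmt5 (F : ZeroAtInftyContinuousMap ℕ ℝ → ZeroAtInftyContinuousMap ℕ ℝ)
    (hF : ∀ (x : ZeroAtInftyContinuousMap ℕ ℝ) (n : ℕ),
      F x n = Real.sqrt |x n| + 1 / ((n : ℝ) + 1)) :
    ¬ ∃ (a b : ℝ) (_ : a < b) (u : ℝ → ZeroAtInftyContinuousMap ℕ ℝ),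
      ∀ t ∈ Set.Ioo a b, HasDerivAt u (F (u t)) t := by
  rintro ⟨a, b, hab, u, hu⟩
  obtain ⟨s, has, hsb⟩ := exists_between hab
  obtain ⟨t, hst, htb⟩ := exists_between hsb
  have hcoord (n : ℕ) : ∀ r ∈ Icc s t, HasDerivAt (fun r => u r n) (F (u r) n) r :=
    fun r hr => (hu r (Icc_subset_Ioo has htb hr)).zeroAtInftyContinuousMap_apply n
  have hsuper (n : ℕ) : ∀ r ∈ Icc s t, √|u r n| < F (u r) n := fun r _ => by
    rw [hF]
    exact lt_add_of_pos_right _ Nat.one_div_pos_of_nat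
  have hsqrt : Tendsto (fun n => √|u s n|) atTop (𝓝 0) := by
    simpa using ((u s).tendsto_atTop_nat.abs).sqrt
  have hlower : Tendsto (fun n => (t - s - 2 * √|u s n|) ^ 2 / 4) atTop (𝓝 ((t - s) ^ 2 / 4)) := by
    simpa using (((hsqrt.const_mul 2).const_sub (t - s)).pow 2).div_const 4
  have hbound : ∀ᶠ n in atTop, (t - s - 2 * √|u s n|) ^ 2 / 4 ≤ u t n := by
    filter_upwards [hsqrt.eventually (eventually_le_nhds (by linarith : (0 : ℝ) < (t - s) / 2))]
      with n hn
    exact sq_le_of_sqrt_abs_lt_deriv (hcoord n) (hsuper n) (by linarith)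
  have hlimit := le_of_tendsto_of_tendsto hlower (u t).tendsto_atTop_nat hbound
  nlinarith
end

section
/- The linear map L : ℓ₁ → C(c₀), L((a_i)) = Σ_i a_i · N_i f, where (N_i) is a partition of ℕ into infinite pairwise disjoint subsets and N_i f is the spreading of the field f(x)_n = √|x_n| + 1/(n+1) over N_i, is injective. -/
/-!
At `x = 0` the spreading `N_i f` is the indicator of `N_i` times `m ↦ 1/(m+1)`, a function of
sup norm at most one, so the series `Σ_i a_i • N_i f 0` converges in `C₀(ℕ)` for `a ∈ ℓ₁`.
Since the `N_i` are disjoint, evaluating it at a point `n ∈ N_i` picks out the single term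
`a_i / (n+1)`, which recovers `a` from `L a`.
-/

open scoped ZeroAtInfty

namespace ZeroAtInftyContinuousMap

variable {ι α β : Type*} [TopologicalSpace α] [NormedAddCommGroup β]

theorem norm_le {f : C₀(α, β)} {C : ℝ} (hC : 0 ≤ C) : ‖f‖ ≤ C ↔ ∀ x, ‖f x‖ ≤ C := by
  rw [← norm_toBCF_eq_norm]
  exact BoundedContinuousFunction.norm_le hC

theorem tsum_apply {f : ι → C₀(α, β)} (hf : Summable f) (x : α) :
    (∑' i, f i) x = ∑' i, f i x := by
  let eval : C₀(α, β) →+ β :=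
    { toFun := fun f => f x, map_zero' := rfl, map_add' := fun _ _ => rfl }
  have heval : Continuous eval :=
    (continuous_eval_const x).comp isometry_toBCF.continuous
  exact ((hf.hasSum.map eval heval).tsum_eq).symm

end ZeroAtInftyContinuousMap

theorem lp.summable_smul_of_norm_le {ι 𝕜 E : Type*} [NormedField 𝕜] [NormedAddCommGroup E]
    [NormedSpace 𝕜 E] [CompleteSpace E] (a : lp (fun _ : ι => 𝕜) 1) {g : ι → E} {C : ℝ}
    (hg : ∀ j, ‖g j‖ ≤ C) : Summable fun j => a j • g j := by
  have ha : Summable fun j => ‖a j‖ := by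
    simpa using (lp.memℓp a).summable (p := 1) (by norm_num)
  refine Summable.of_norm_bounded (ha.mul_right C) fun j => ?_
  exact (norm_smul_le _ _).trans (mul_le_mul_of_nonneg_left (hg j) (norm_nonneg _))

theorem tsum_mul_indicator_of_mem {ι α R : Type*} [Semiring R] [TopologicalSpace R] [T2Space R]
    {N : ι → Set α} (hdisj : Pairwise (Function.onFun Disjoint N)) (c : ι → R) (w : α → R)
    {i : ι} {x : α} (hx : x ∈ N i) : ∑' j, c j * (N j).indicator w x = c i * w x := by
  rw [tsum_eq_single i fun j hji => ?_, Set.indicator_of_mem hx]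
  have hxj : x ∉ N j := Set.disjoint_left.mp (hdisj hji.symm) hx
  rw [Set.indicator_of_notMem hxj, mul_zero]

theorem stmt7_general (N : ℕ → Set ℕ) (hinf : ∀ i, (N i).Infinite)
    (hdisj : Pairwise (Function.onFun Disjoint N))
    (g : ℕ → ZeroAtInftyContinuousMap ℕ ℝ → ZeroAtInftyContinuousMap ℕ ℝ)
    (hg : ∀ (i : ℕ) (x : ZeroAtInftyContinuousMap ℕ ℝ) (n : ℕ),
      g i x n = Set.indicator (N i) (fun m => Real.sqrt |x m| + 1 / ((m : ℝ) + 1)) n) :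
    Function.Injective (fun a : lp (fun _ : ℕ => ℝ) 1 =>
      fun x : ZeroAtInftyContinuousMap ℕ ℝ => ∑' i, a i • g i x) := by
  set w : ℕ → ℝ := fun m => 1 / ((m : ℝ) + 1)
  have hg0 : ∀ j n, g j 0 n = (N j).indicator w n := by simp [hg, w]
  have hw : ∀ (s : Set ℕ) n, ‖s.indicator w n‖ ≤ 1 := fun s n => by
    refine (norm_indicator_le_norm_self w n).trans ?_
    rw [Real.norm_of_nonneg (by positivity)]
    exact div_le_one_of_le₀ (by linarith [n.cast_nonneg (α := ℝ)]) (by positivity)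
  have hbdd : ∀ j, ‖g j 0‖ ≤ 1 := fun j =>
    (ZeroAtInftyContinuousMap.norm_le zero_le_one).2 fun n => by rw [hg0]; exact hw _ n
  intro a b hab
  ext i
  obtain ⟨n, hn⟩ := (hinf i).nonempty
  have heval : ∀ c : lp (fun _ : ℕ => ℝ) 1, (∑' j, c j • g j 0) n = c i * w n := fun c => by
    rw [ZeroAtInftyContinuousMap.tsum_apply (lp.summable_smul_of_norm_le c hbdd)]
    simp only [ZeroAtInftyContinuousMap.smul_apply, hg0, smul_eq_mul]
    exact tsum_mul_indicator_of_mem hdisj _ w hn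
  have hw_ne : w n ≠ 0 := by positivity
  have hab_n := congrArg (· n) (congrFun hab 0)
  simp only [heval] at hab_n
  exact mul_right_cancel₀ hw_ne hab_n

/-- The linear map `L : ℓ₁ → C(c₀)`, `L((a_i)) = Σ_i a_i • N_i f`, built from
the spreadings of Dieudonné's field over a partition of `ℕ` into infinite
pairwise disjoint sets, is injective. -/
theorem stmt7 (N : ℕ → Set ℕ) (hinf : ∀ i, (N i).Infinite)
    (hdisj : Pairwise (Function.onFun Disjoint N)) (hcov : (⋃ i, N i) = Set.univ)
    (g : ℕ → ZeroAtInftyContinuousMap ℕ ℝ → ZeroAtInftyContinuousMap ℕ ℝ)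
    (hg : ∀ (i : ℕ) (x : ZeroAtInftyContinuousMap ℕ ℝ) (n : ℕ),
      g i x n = Set.indicator (N i) (fun m => Real.sqrt |x m| + 1 / ((m : ℝ) + 1)) n) :
    Function.Injective (fun a : lp (fun _ : ℕ => ℝ) 1 =>
      fun x : ZeroAtInftyContinuousMap ℕ ℝ => ∑' i, a i • g i x) :=
  stmt7_general N hinf hdisj g hg
end

section
/- Let X be an infinite-dimensional Banach space and 0 < p < ∞. Then ℓ_p(X) \ ⋃_{0<q<p} ℓ_q(X) together with 0 contains a closed subspace of ℓ_p(X) whose dimension equals dim ℓ_p(X) = dim X; i.e., the set is maximal-spaceable. -/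
/-!
Fix a positive sequence `a` with `∑ aₙ ^ p < ∞` and `∑ aₙ ^ q = ∞` for every `q < p`, for
example `aₙ = bₙ ^ (1 / p)` with `bₙ = 1 / (n log² n)`: `b` is summable by Cauchy condensation,
but `bₙ ^ r` dominates `1 / n` for every `r < 1`. The subspace `{(aₙ x)ₙ : x ∈ X}` is a copy of
`X`, and the `ℓ_q` norm of its element `(aₙ x)ₙ` is `‖x‖` times the `ℓ_q` norm of `a`. It consists
of the sequences `z` with `a₀ zₙ = aₙ z₀` for all `n`, hence is closed even in the product
topology, and `ℓ_p` convergence implies coordinatewise convergence.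
-/

open Filter Topology Real

noncomputable def bertrand (x : ℝ) : ℝ := (x * log x ^ 2)⁻¹

lemma bertrand_pos {x : ℝ} (hx : 1 < x) : 0 < bertrand x := by
  have := log_pos hx
  unfold bertrand
  positivity

lemma bertrand_antitoneOn : AntitoneOn bertrand (Set.Ioi 1) := by
  intro x hx y _ hxy
  have hx0 : (0 : ℝ) < x := zero_lt_one.trans hx
  have hy0 : (0 : ℝ) < y := hx0.trans_le hxy
  have hlog := log_pos hx
  unfold bertrand
  gcongr

lemma two_pow_mul_bertrand_two_pow (k : ℕ) :
    2 ^ k * bertrand (2 ^ k) = (log 2 ^ 2)⁻¹ * ((k : ℝ) ^ 2)⁻¹ := by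
  have : (2 : ℝ) ^ k ≠ 0 := by positivity
  simp only [bertrand, log_pow]
  field_simp

lemma summable_bertrand_nat_add_two : Summable fun n : ℕ => bertrand (n + 2) := by
  have hmem : ∀ n : ℕ, (n + 2 : ℝ) ∈ Set.Ioi 1 := fun n => by
    simp only [Set.mem_Ioi]; linarith [n.cast_nonneg (α := ℝ)]
  have hpos : ∀ n : ℕ, 0 < bertrand (n + 2) := fun n => bertrand_pos (hmem n)
  rw [← summable_condensed_iff_of_nonneg (fun n => (hpos n).le)]
  · refine ((Real.summable_nat_pow_inv.mpr one_lt_two).mul_left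
      (log 2 ^ 2)⁻¹).of_norm_bounded_eventually_nat ?_
    filter_upwards [eventually_ge_atTop 1] with k hk
    have h1 : (1 : ℝ) < 2 ^ k := one_lt_pow₀ one_lt_two (by omega)
    rw [norm_of_nonneg (by have := hpos (2 ^ k); positivity), ← two_pow_mul_bertrand_two_pow]
    push_cast
    gcongr
    exact bertrand_antitoneOn h1 (Set.mem_Ioi.mpr (by linarith)) (by linarith)
  · intro m n _ hmn
    exact bertrand_antitoneOn (hmem m) (hmem n) (by gcongr)

lemma eventually_inv_le_bertrand_rpow {r : ℝ} (hr0 : 0 < r) (hr1 : r < 1) :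
    ∀ᶠ x in atTop, x⁻¹ ≤ bertrand x ^ r := by
  have hε : 0 < (1 - r) / (2 * r) := by apply div_pos <;> linarith
  filter_upwards [(isLittleO_log_rpow_atTop hε).bound one_pos, eventually_gt_atTop 1]
    with x hlog hx
  have hx0 : 0 < x := zero_lt_one.trans hx
  have hlx : 0 < log x := log_pos hx
  rw [one_mul, norm_of_nonneg hlx.le, norm_of_nonneg (by positivity)] at hlog
  have key : x * log x ^ 2 ≤ x ^ (1 / r) := calc
    x * log x ^ 2 ≤ x * (x ^ ((1 - r) / (2 * r))) ^ 2 := by gcongr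
    _ = x ^ (1 + (1 - r) / (2 * r) * 2) := by
      rw [rpow_add hx0, rpow_one, rpow_mul hx0.le, rpow_two]
    _ = x ^ (1 / r) := by congr 1; field_simp; ring
  calc x⁻¹ = ((x ^ (1 / r)) ^ r)⁻¹ := by
        rw [← rpow_mul hx0.le, one_div_mul_cancel hr0.ne', rpow_one]
    _ ≤ ((x * log x ^ 2) ^ r)⁻¹ := by gcongr
    _ = bertrand x ^ r := by rw [bertrand, inv_rpow (by positivity)]

lemma not_summable_bertrand_nat_add_two_rpow {r : ℝ} (hr0 : 0 < r) (hr1 : r < 1) :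
    ¬ Summable fun n : ℕ => bertrand (n + 2) ^ r := by
  intro h
  have hshift : Tendsto (fun n : ℕ => (n + 2 : ℝ)) atTop atTop :=
    tendsto_atTop_add_const_right _ 2 tendsto_natCast_atTop_atTop
  have : Summable fun n : ℕ => ((n + 2 : ℕ) : ℝ)⁻¹ := by
    refine h.of_norm_bounded_eventually_nat ?_
    filter_upwards [hshift.eventually (eventually_inv_le_bertrand_rpow hr0 hr1)] with n hn
    rw [norm_inv, Real.norm_natCast]
    exact_mod_cast hn
  exact not_summable_natCast_inv ((summable_nat_add_iff 2).mp this)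

lemma exists_pos_summable_rpow_not_summable_rpow_lt {p : ℝ} (hp : 0 < p) :
    ∃ a : ℕ → ℝ, (∀ n, 0 < a n) ∧ Summable (fun n => a n ^ p) ∧
      ∀ q, 0 < q → q < p → ¬ Summable fun n => a n ^ q := by
  have hpos : ∀ n : ℕ, 0 < bertrand (n + 2) := fun n =>
    bertrand_pos (by linarith [n.cast_nonneg (α := ℝ)])
  have hpow : ∀ (q : ℝ) (n : ℕ),
      (bertrand (n + 2) ^ p⁻¹) ^ q = bertrand (n + 2) ^ (q / p) := fun q n => by
    rw [← rpow_mul (hpos n).le, inv_mul_eq_div]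
  refine ⟨fun n => bertrand (n + 2) ^ p⁻¹, fun n => rpow_pos_of_pos (hpos n) _, ?_, ?_⟩
  · simpa only [hpow, div_self hp.ne', rpow_one] using summable_bertrand_nat_add_two
  · intro q hq hqp
    simpa only [hpow] using
      not_summable_bertrand_nat_add_two_rpow (div_pos hq hp) ((div_lt_one hp).mpr hqp)

section smulSeq

variable {ι 𝕜 M : Type*} [Field 𝕜] [AddCommGroup M] [Module 𝕜 M]

def smulSeq (a : ι → 𝕜) : M →ₗ[𝕜] ι → M := LinearMap.pi fun i => a i • LinearMap.id

@[simp]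
lemma smulSeq_apply (a : ι → 𝕜) (x : M) (i : ι) : smulSeq a x i = a i • x := rfl

lemma smulSeq_injective {a : ι → 𝕜} {i₀ : ι} (h : a i₀ ≠ 0) :
    Function.Injective (smulSeq a : M →ₗ[𝕜] ι → M) := fun _ _ hxy =>
  smul_right_injective M h (congrFun hxy i₀)

lemma range_smulSeq {a : ι → 𝕜} {i₀ : ι} (h : a i₀ ≠ 0) :
    (LinearMap.range (smulSeq a : M →ₗ[𝕜] ι → M) : Set (ι → M)) =
      {z | ∀ i, a i₀ • z i = a i • z i₀} := by
  ext z
  constructor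
  · rintro ⟨x, rfl⟩ i
    simp only [smulSeq_apply, smul_smul, mul_comm]
  · intro hz
    refine ⟨(a i₀)⁻¹ • z i₀, funext fun i => ?_⟩
    rw [smulSeq_apply, smul_smul, mul_comm, ← smul_smul, ← hz i, inv_smul_smul₀ h]

lemma isClosed_range_smulSeq [TopologicalSpace M] [T2Space M] [ContinuousConstSMul 𝕜 M]
    {a : ι → 𝕜} {i₀ : ι} (h : a i₀ ≠ 0) :
    IsClosed (LinearMap.range (smulSeq a : M →ₗ[𝕜] ι → M) : Set (ι → M)) := by
  rw [range_smulSeq h, Set.ofPred_forall]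
  exact isClosed_iInter fun i => isClosed_eq
    ((continuous_apply i).const_smul _) ((continuous_apply i₀).const_smul _)

end smulSeq

lemma norm_smul_rpow {𝕜 E : Type*} [NormedField 𝕜] [SeminormedAddCommGroup E]
    [NormedSpace 𝕜 E] (c : 𝕜) (x : E) (q : ℝ) : ‖c • x‖ ^ q = ‖c‖ ^ q * ‖x‖ ^ q := by
  rw [norm_smul, mul_rpow (norm_nonneg c) (norm_nonneg x)]

section lp

variable {ι : Type*} {E : ι → Type*} [∀ i, NormedAddCommGroup (E i)] {p : ℝ}

lemma summable_norm_sub_rpow (hp : 0 < p) {f g : ∀ i, E i}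
    (hf : Summable fun i => ‖f i‖ ^ p) (hg : Summable fun i => ‖g i‖ ^ p) :
    Summable fun i => ‖f i - g i‖ ^ p := by
  have hp' : 0 < (ENNReal.ofReal p).toReal := by rwa [ENNReal.toReal_ofReal hp.le]
  have hmem : ∀ h : ∀ i, E i,
      Memℓp h (ENNReal.ofReal p) ↔ Summable fun i => ‖h i‖ ^ p := fun h => by
    rw [memℓp_gen_iff hp', ENNReal.toReal_ofReal hp.le]
  exact (hmem _).mp (((hmem f).mpr hf).sub ((hmem g).mpr hg))

lemma tendsto_pi_nhds_of_tendsto_tsum_norm_sub_rpow {α : Type*} {l : Filter α}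
    (hp : 0 < p) {F : α → ∀ i, E i} {z : ∀ i, E i}
    (hsum : ∀ k, Summable fun i => ‖F k i - z i‖ ^ p)
    (hlim : Tendsto (fun k => ∑' i, ‖F k i - z i‖ ^ p) l (𝓝 0)) : Tendsto F l (𝓝 z) := by
  refine tendsto_pi_nhds.mpr fun i => tendsto_iff_norm_sub_tendsto_zero.mpr ?_
  have hpow : Tendsto (fun k => ‖F k i - z i‖ ^ p) l (𝓝 0) :=
    squeeze_zero (fun k => by positivity)
      (fun k => (hsum k).le_tsum i fun j _ => by positivity) hlim
  simpa only [← rpow_mul (norm_nonneg _), mul_inv_cancel₀ hp.ne', rpow_one] using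
    hpow.rpow_const_nhds_zero (inv_pos.mpr hp)

end lp

theorem stmt12_general (X : Type*) [NormedAddCommGroup X] [NormedSpace ℝ X]
    (p : ℝ) (hp : 0 < p) :
    ∃ S : Submodule ℝ (ℕ → X),
      (∀ f ∈ S, Summable fun n => ‖f n‖ ^ p) ∧
      Module.rank ℝ S = Module.rank ℝ X ∧
      (∀ f ∈ S, f ≠ 0 → ∀ q : ℝ, 0 < q → q < p →
        ¬ Summable fun n => ‖f n‖ ^ q) ∧
      (∀ z : ℕ → X, (Summable fun n => ‖z n‖ ^ p) →
        (∃ F : ℕ → ℕ → X, (∀ k, F k ∈ S) ∧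
          Tendsto (fun k => ∑' n, ‖F k n - z n‖ ^ p) atTop (𝓝 0)) → z ∈ S) := by
  obtain ⟨a, ha_pos, ha_sum, ha_not⟩ := exists_pos_summable_rpow_not_summable_rpow_lt hp
  have ha0 : a 0 ≠ 0 := (ha_pos 0).ne'
  have ha_norm : ∀ n, ‖a n‖ = a n := fun n => norm_of_nonneg (ha_pos n).le
  have hS_lp : ∀ f ∈ LinearMap.range (smulSeq a : X →ₗ[ℝ] ℕ → X),
      Summable fun n => ‖f n‖ ^ p := by
    rintro _ ⟨x, rfl⟩
    simpa only [smulSeq_apply, norm_smul_rpow, ha_norm] using ha_sum.mul_right (‖x‖ ^ p)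
  refine ⟨LinearMap.range (smulSeq a), hS_lp,
    (LinearEquiv.ofInjective _ (smulSeq_injective ha0)).rank_eq.symm, ?_, ?_⟩
  · rintro _ ⟨x, rfl⟩ hx q hq hqp hsum
    have hxq : ‖x‖ ^ q ≠ 0 :=
      (rpow_pos_of_pos (norm_pos_iff.mpr fun h => hx (by simp [h])) q).ne'
    simp only [smulSeq_apply, norm_smul_rpow, ha_norm, summable_mul_right_iff hxq] at hsum
    exact ha_not q hq hqp hsum
  · rintro z hz ⟨F, hF, hlim⟩
    have hsum k := summable_norm_sub_rpow hp (hS_lp _ (hF k)) hz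
    exact (isClosed_range_smulSeq ha0).mem_of_tendsto
      (tendsto_pi_nhds_of_tendsto_tsum_norm_sub_rpow hp hsum hlim)
      (Eventually.of_forall hF)

/-- For an infinite-dimensional Banach space `X` and `0 < p < ∞`, the set
`ℓ_p(X) \ ⋃_{0<q<p} ℓ_q(X)` is maximal-spaceable: together with `0` it
contains a closed (sequentially, for the `ℓ_p` metric) subspace of `ℓ_p(X)`
of dimension `dim ℓ_p(X) = dim X`. -/
theorem stmt12 (X : Type*) [NormedAddCommGroup X] [NormedSpace ℝ X]
    [CompleteSpace X] (hX : ¬ FiniteDimensional ℝ X) (p : ℝ) (hp : 0 < p) :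
    ∃ S : Submodule ℝ (ℕ → X),
      (∀ f ∈ S, Summable fun n => ‖f n‖ ^ p) ∧
      Module.rank ℝ S = Module.rank ℝ X ∧
      (∀ f ∈ S, f ≠ 0 → ∀ q : ℝ, 0 < q → q < p →
        ¬ Summable fun n => ‖f n‖ ^ q) ∧
      (∀ z : ℕ → X, (Summable fun n => ‖z n‖ ^ p) →
        (∃ F : ℕ → ℕ → X, (∀ k, F k ∈ S) ∧
          Tendsto (fun k => ∑' n, ‖F k n - z n‖ ^ p) atTop (𝓝 0)) → z ∈ S) :=
  stmt12_general X p hp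
end
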